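/- arXiv:2305.06093 — 5 statements merged into one kernel-verified Lean document; each statement's English description precedes it below -/
import Mathlib

section
/- For any decision table T with at least one row, the number of rows of T is at most (k·W(T))^{S(T)}, where W(T) is the number of columns and S(T) is the maximum over rows δ of the minimum number of columns needed to distinguish δ from all other rows. -/
/- Decision tables over E_{k+2} = {0, ..., k+1}, following Ostonov & Moshkov,
"Deterministic and Strongly Nondeterministic Decision Trees for Decision Tables
from Closed Classes".  Columns are labeled with attributes (natural numbers),
rows are functions supported on the attribute set, decisions are Booleans. -/

namespace ClosedClasses

/-- A decision table with 0-1-decisions over `E_{k+2}`. Rows are pairwise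
different (they form a `Finset`) and vanish outside the attribute set. -/
structure Table (k : ℕ) where
  attrs : Finset ℕ
  rows : Finset (ℕ → Fin (k + 2))
  dec : (ℕ → Fin (k + 2)) → Bool
  supp : ∀ r ∈ rows, ∀ a ∉ attrs, r a = 0

namespace Table

variable {k : ℕ}

/-- Number of columns. -/
def W (T : Table k) : ℕ := T.attrs.card

/-- Number of rows. -/
def N (T : Table k) : ℕ := T.rows.card

/-- All rows carry the same decision. -/
def ConstDec (T : Table k) : Prop :=
  ∀ r ∈ T.rows, ∀ r' ∈ T.rows, T.dec r = T.dec r'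

/-- `D` separates the row `r` from all other rows of `T`. -/
def Separates (T : Table k) (D : Finset ℕ) (r : ℕ → Fin (k + 2)) : Prop :=
  D ⊆ T.attrs ∧ ∀ r' ∈ T.rows, r' ≠ r → ∃ a ∈ D, r a ≠ r' a

/-- `S(T, r)`: minimum cardinality of a separating set for row `r`. -/
noncomputable def Srow (T : Table k) (r : ℕ → Fin (k + 2)) : ℕ :=
  sInf {m | ∃ D : Finset ℕ, T.Separates D r ∧ D.card = m}

/-- `S(T)`: maximum over rows of `S(T, r)`. -/
noncomputable def S (T : Table k) : ℕ :=
  sSup {m | ∃ r ∈ T.rows, T.Srow r = m}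

/-- A test of `T`: a set of columns distinguishing rows with different decisions. -/
def IsTest (T : Table k) (D : Finset ℕ) : Prop :=
  D ⊆ T.attrs ∧
    ∀ r ∈ T.rows, ∀ r' ∈ T.rows, T.dec r ≠ T.dec r' → ∃ a ∈ D, r a ≠ r' a

/-- `Θ(T)`: minimum cardinality of a test of `T`. -/
noncomputable def theta (T : Table k) : ℕ :=
  sInf {m | ∃ D : Finset ℕ, T.IsTest D ∧ D.card = m}

end Table

/-- `(k+2)`-decision trees: leaves carry decisions, internal nodes query an
attribute and branch on its `k+2` possible values. -/
inductive DT (k : ℕ) where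
  | leaf : Bool → DT k
  | node : ℕ → (Fin (k + 2) → DT k) → DT k

namespace DT

variable {k : ℕ}

/-- Deterministic evaluation of a tree on a row. -/
def eval : DT k → (ℕ → Fin (k + 2)) → Bool
  | leaf b, _ => b
  | node a ch, r => eval (ch (r a)) r

/-- Depth: maximum number of queries along a complete path. -/
def depth : DT k → ℕ
  | leaf _ => 0
  | node _ ch => 1 + Finset.univ.sup fun i => (ch i).depth

/-- The set `P(Γ)` of attributes queried in the tree. -/
def attrSet : DT k → Finset ℕ
  | leaf _ => ∅
  | node a ch => insert a (Finset.univ.biUnion fun i => (ch i).attrSet)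

/-- `ψ`-cost: maximum over complete paths of `ψ` of the word of queried
attributes (the accumulator `w` holds attributes already queried). -/
def cost (ψ : List ℕ → ℕ) : DT k → List ℕ → ℕ
  | leaf _, w => ψ w
  | node a ch, w => Finset.univ.sup fun i => cost ψ (ch i) (a :: w)

end DT

/-- `Γ` is a deterministic decision tree for the table `T`. -/
def IsDT {k : ℕ} (T : Table k) (Γ : DT k) : Prop :=
  Γ.attrSet ⊆ T.attrs ∧ ∀ r ∈ T.rows, Γ.eval r = T.dec r

/-- `h^d(T)`: minimum depth of a deterministic decision tree for `T`. -/
noncomputable def hd {k : ℕ} (T : Table k) : ℕ :=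
  sInf {m | ∃ Γ : DT k, IsDT T Γ ∧ Γ.depth = m}

/-- `ψ^d(T)`: minimum `ψ`-complexity of a deterministic decision tree for `T`. -/
noncomputable def psid {k : ℕ} (ψ : List ℕ → ℕ) (T : Table k) : ℕ :=
  sInf {m | ∃ Γ : DT k, IsDT T Γ ∧ Γ.cost ψ [] = m}

/-- A row satisfies a rule (a conjunction of equations `attribute = value`). -/
def RuleSat {k : ℕ} (rule : List (ℕ × Fin (k + 2))) (r : ℕ → Fin (k + 2)) : Prop :=
  ∀ p ∈ rule, r p.1 = p.2

/-- A strongly nondeterministic decision tree for `T`, represented by the set of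
words of its complete paths (rules): every rule uses attributes of `T`, each
row with decision 1 satisfies some rule, and each rule is consistent only with
rows carrying decision 1. -/
def IsSNDT {k : ℕ} (T : Table k) (R : Finset (List (ℕ × Fin (k + 2)))) : Prop :=
  (∀ rule ∈ R, ∀ p ∈ rule, p.1 ∈ T.attrs) ∧
  (∀ r ∈ T.rows, T.dec r = true → ∃ rule ∈ R, RuleSat rule r) ∧
  (∀ rule ∈ R, ∀ r ∈ T.rows, RuleSat rule r → T.dec r = true)

/-- `ψ^s(T)`: minimum `ψ`-complexity of a strongly nondeterministic decision
tree for `T`. -/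
noncomputable def psis {k : ℕ} (ψ : List ℕ → ℕ) (T : Table k) : ℕ :=
  sInf {m | ∃ R, IsSNDT T R ∧ R.sup (fun rule => ψ (rule.map Prod.fst)) = m}

/-- `h^s(T)`: minimum depth of a strongly nondeterministic decision tree. -/
noncomputable def hs {k : ℕ} (T : Table k) : ℕ :=
  sInf {m | ∃ R, IsSNDT T R ∧ R.sup (fun rule => (rule.map Prod.fst).length) = m}

/-- A complexity measure on finite words over the alphabet `{f_i : i ∈ ω}`. -/
structure CMeasure where
  ψ : List ℕ → ℕ
  pos : ∀ w, ψ w = 0 ↔ w = []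
  perm : ∀ w w' : List ℕ, w.Perm w' → ψ w = ψ w'
  mono : ∀ w₁ w₂ : List ℕ, ψ w₁ ≤ ψ (w₁ ++ w₂)
  subadd : ∀ w₁ w₂ : List ℕ, ψ (w₁ ++ w₂) ≤ ψ w₁ + ψ w₂

/-- Bounded complexity measure: `ψ(α) ≥ |α|`. -/
def CMeasure.Bounded (ψ : CMeasure) : Prop := ∀ w : List ℕ, w.length ≤ ψ.ψ w

/-- Extension of a complexity measure to finite sets of attributes. -/
def CMeasure.setCost (ψ : CMeasure) (D : Finset ℕ) : ℕ := ψ.ψ (D.sort (· ≤ ·))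

namespace Table

variable {k : ℕ}

/-- `S_ψ(T, r)`: minimum `ψ`-complexity of a set separating `r` from the other rows. -/
noncomputable def Spsirow (ψ : CMeasure) (T : Table k) (r : ℕ → Fin (k + 2)) : ℕ :=
  sInf {m | ∃ D : Finset ℕ, T.Separates D r ∧ ψ.setCost D = m}

/-- `S_ψ(T)`: maximum over rows of `S_ψ(T, r)`. -/
noncomputable def Spsi (ψ : CMeasure) (T : Table k) : ℕ :=
  sSup {m | ∃ r ∈ T.rows, Spsirow ψ T r = m}

/-- `Θ_ψ(T)`: minimum `ψ`-complexity of a test of `T`. -/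
noncomputable def thetapsi (ψ : CMeasure) (T : Table k) : ℕ :=
  sInf {m | ∃ D : Finset ℕ, T.IsTest D ∧ ψ.setCost D = m}

/-- `W_ψ(T) = ψ(P(T))`. -/
def Wpsi (ψ : CMeasure) (T : Table k) : ℕ := ψ.setCost T.attrs

/-- `V_ψ(T) = max{ψ(f_i) : f_i ∈ P(T)}`. -/
noncomputable def Vpsi (ψ : CMeasure) (T : Table k) : ℕ :=
  sSup {m | ∃ a ∈ T.attrs, ψ.ψ [a] = m}

end Table

/-- Restriction of a row to a set of attributes. -/
def restrict {k : ℕ} (A : Finset ℕ) (r : ℕ → Fin (k + 2)) : ℕ → Fin (k + 2) :=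
  fun a => if a ∈ A then r a else 0

/-- `T'` belongs to the closure `[T]` of `T` under removal of columns and
changing of decisions: `T'` keeps a subset of the columns of `T`, its rows are
the restrictions of the rows of `T`, and its decisions are arbitrary. -/
def InClosure {k : ℕ} (T' T : Table k) : Prop :=
  T'.attrs ⊆ T.attrs ∧ (T'.rows : Set (ℕ → Fin (k + 2))) = restrict T'.attrs '' (T.rows : Set (ℕ → Fin (k + 2)))

/-- A nonempty class of decision tables closed under removal of columns and
changing of decisions. -/
def ClosedClass {k : ℕ} (A : Set (Table k)) : Prop :=
  A.Nonempty ∧ ∀ T ∈ A, ∀ T' : Table k, InClosure T' T → T' ∈ A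

/-- `Ŝ_ψ(T) = max{S_ψ(T') : T' ∈ [T]}`. -/
noncomputable def Shatpsi {k : ℕ} (ψ : CMeasure) (T : Table k) : ℕ :=
  sSup {m | ∃ T' : Table k, InClosure T' T ∧ T'.Spsi ψ = m}

/-- `Ŝ(T) = max{S(T') : T' ∈ [T]}`. -/
noncomputable def Shat {k : ℕ} (T : Table k) : ℕ :=
  sSup {m | ∃ T' : Table k, InClosure T' T ∧ T'.S = m}

/-- Fixing the attributes of the word `p` to the listed values restricts `T`
to a subtable (possibly empty) in which all rows carry the same decision. -/
def FixConst {k : ℕ} (T : Table k) (p : List (ℕ × Fin (k + 2))) : Prop :=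
  ∀ r ∈ T.rows, ∀ r' ∈ T.rows, RuleSat p r → RuleSat p r' → T.dec r = T.dec r'

/-- `M_ψ(T, δ)`: minimum `ψ`-value of a word of attributes of `T` whose
fixation to the values of `δ` yields a subtable with constant decisions. -/
noncomputable def Mpsirow {k : ℕ} (ψ : CMeasure) (T : Table k)
    (δ : ℕ → Fin (k + 2)) : ℕ :=
  sInf {m | ∃ p : List (ℕ × Fin (k + 2)),
    (∀ q ∈ p, q.1 ∈ T.attrs ∧ q.2 = δ q.1) ∧ FixConst T p ∧
      ψ.ψ (p.map Prod.fst) = m}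

/-- `M_ψ(T)`: maximum of `M_ψ(T, δ)` over all tuples `δ ∈ E_{k+2}^{W(T)}`. -/
noncomputable def Mpsi {k : ℕ} (ψ : CMeasure) (T : Table k) : ℕ :=
  sSup {m | ∃ δ : ℕ → Fin (k + 2), (∀ a ∉ T.attrs, δ a = 0) ∧ Mpsirow ψ T δ = m}

/-- A critical table: for every column there are two rows differing exactly
in this column. -/
def Critical {k : ℕ} (T : Table k) : Prop :=
  T.rows.Nonempty ∧ ∀ a ∈ T.attrs, ∃ r ∈ T.rows, ∃ r' ∈ T.rows,
    r a ≠ r' a ∧ ∀ b : ℕ, b ≠ a → r b = r' b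

/-- `H_D(n)`: the largest element of `D` not exceeding `n` (0 if none). -/
noncomputable def HD (D : Set ℕ) (n : ℕ) : ℕ := sSup (D ∩ Set.Iic n)

end ClosedClasses

open ClosedClasses

namespace ClosedClasses
namespace Table

variable {k : ℕ}

lemma separates_attrs (T : Table k) {r : ℕ → Fin (k + 2)} (hr : r ∈ T.rows) :
    T.Separates T.attrs r := by
  refine ⟨subset_rfl, fun r' hr' hne => ?_⟩
  obtain ⟨a, ha⟩ := Function.ne_iff.mp (Ne.symm hne)
  refine ⟨a, ?_, ha⟩
  by_contra hc
  exact ha (by rw [T.supp r hr a hc, T.supp r' hr' a hc])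

lemma exists_min_sep (T : Table k) {r : ℕ → Fin (k + 2)} (hr : r ∈ T.rows) :
    ∃ D : Finset ℕ, T.Separates D r ∧ D.card = T.Srow r := by
  have hne : {m | ∃ D : Finset ℕ, T.Separates D r ∧ D.card = m}.Nonempty :=
    ⟨T.attrs.card, T.attrs, T.separates_attrs hr, rfl⟩
  obtain ⟨D, hD, hc⟩ := Nat.sInf_mem hne
  exact ⟨D, hD, hc⟩

lemma Srow_le_S (T : Table k) {r : ℕ → Fin (k + 2)} (hr : r ∈ T.rows) :
    T.Srow r ≤ T.S := by
  apply le_csSup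
  · apply Set.Finite.bddAbove
    apply Set.Finite.subset (T.rows.image T.Srow).finite_toSet
    rintro m ⟨r', hr', rfl⟩
    exact Finset.mem_coe.mpr (Finset.mem_image_of_mem _ hr')
  · exact ⟨r, hr, rfl⟩

end Table
end ClosedClasses


/-- `N(T) ≤ (k · W(T))^{S(T)}` for any nonempty decision table. -/
theorem rows_le_pow_sep (k : ℕ) (T : Table k) (h : T.rows.Nonempty) :
    T.N ≤ ((k + 2) * T.W) ^ T.S := by
  classical
  rcases lt_or_ge T.rows.card 2 with h1 | h2
  · -- single row
    have hc : T.rows.card = 1 := le_antisymm (by omega) h.card_pos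
    obtain ⟨r0, hr0⟩ := Finset.card_eq_one.mp hc
    have hsep0 : T.Separates ∅ r0 := by
      refine ⟨Finset.empty_subset _, fun r' hr' hne => absurd ?_ hne⟩
      simpa [hr0] using hr'
    have hSrow : T.Srow r0 = 0 := Nat.le_zero.mp (Nat.sInf_le ⟨∅, hsep0, rfl⟩)
    have hS : T.S = 0 := by
      have hset : {m | ∃ r ∈ T.rows, T.Srow r = m} = {0} := by
        ext m
        simp [hr0, hSrow, eq_comm]
      rw [Table.S, hset, csSup_singleton]
    simp [Table.N, hc, hS]
  · have h2' : 1 < T.rows.card := h2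
    obtain ⟨r1, hr1, r2, hr2, hne12⟩ := Finset.one_lt_card.mp h2'
    have hattrs : T.attrs.Nonempty := by
      obtain ⟨a, ha⟩ := Function.ne_iff.mp hne12
      refine ⟨a, ?_⟩
      by_contra hcon
      exact ha (by rw [T.supp r1 hr1 a hcon, T.supp r2 hr2 a hcon])
    obtain ⟨a0, ha0⟩ := hattrs
    have hsep : ∀ r ∈ T.rows, ∃ D : Finset ℕ,
        T.Separates D r ∧ D.card ≤ T.S ∧ D.Nonempty := by
      intro r hr
      obtain ⟨D, hD, hcard⟩ := T.exists_min_sep hr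
      refine ⟨D, hD, hcard ▸ T.Srow_le_S hr, ?_⟩
      obtain ⟨r', hr', hner⟩ := Finset.exists_mem_ne h2' r
      obtain ⟨a, haD, _⟩ := hD.2 r' hr' hner
      exact ⟨a, haD⟩
    choose! D hD1 hD2 hD3 using hsep
    set L : (ℕ → Fin (k + 2)) → List ℕ := fun r => (D r).sort (· ≤ ·) with hLdef
    set av : (ℕ → Fin (k + 2)) → Fin T.S → ℕ :=
      fun r i => (L r).getD i (L r).headI with havdef
    have hLmem : ∀ r ∈ T.rows, ∀ i : Fin T.S, av r i ∈ D r := by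
      intro r hr i
      have hne : L r ≠ [] := by
        intro hnil
        have hlen : (L r).length = (D r).card := Finset.length_sort _
        rw [hnil] at hlen
        simp at hlen
        exact (hD3 r hr).ne_empty (Finset.card_eq_zero.mp hlen.symm)
      rcases lt_or_ge (i : ℕ) (L r).length with hlt | hge
      · rw [havdef]
        simp only []
        rw [List.getD_eq_getElem _ _ hlt]
        exact (Finset.mem_sort _).mp (List.getElem_mem hlt)
      · rw [havdef]
        simp only []
        rw [List.getD_eq_default _ _ hge]
        have hh : (L r).headI ∈ L r := by
          cases hl : L r with
          | nil => exact absurd hl hne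
          | cons x xs => simp [hl]
        exact (Finset.mem_sort _).mp hh
    have havattrs : ∀ r ∈ T.rows, ∀ i, av r i ∈ T.attrs :=
      fun r hr i => (hD1 r hr).1 (hLmem r hr i)
    set f : (ℕ → Fin (k + 2)) → (Fin T.S → {a // a ∈ T.attrs} × Fin (k + 2)) :=
      fun r i =>
        if hmem : av r i ∈ T.attrs then (⟨av r i, hmem⟩, r (av r i))
        else (⟨a0, ha0⟩, r (av r i)) with hfdef
    have hinj : Set.InjOn f T.rows := by
      intro r hr r' hr' hf
      by_contra hne
      obtain ⟨a, haD, hval⟩ := (hD1 r hr).2 r' hr' (Ne.symm hne)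
      have haL : a ∈ L r := (Finset.mem_sort _).mpr haD
      obtain ⟨i, hi, hgi⟩ := List.getElem_of_mem haL
      have hiS : i < T.S := by
        have hlen : (L r).length = (D r).card := Finset.length_sort _
        have hle := hD2 r hr
        omega
      set j : Fin T.S := ⟨i, hiS⟩ with hj
      have hav : av r j = a := by
        rw [havdef]
        simp only []
        rw [List.getD_eq_getElem _ _ (by simpa using hi)]
        simpa using hgi
      have e := congrFun hf j
      rw [hfdef] at e
      simp only [dif_pos (havattrs r hr j), dif_pos (havattrs r' hr' j)] at e
      have e1 : av r j = av r' j := congrArg (fun p => (p.1 : ℕ)) e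
      have e2 : r (av r j) = r' (av r' j) := congrArg Prod.snd e
      rw [hav] at e1 e2
      rw [← e1] at e2
      exact hval e2
    have hcard : T.rows.card ≤ Fintype.card (Fin T.S → {a // a ∈ T.attrs} × Fin (k + 2)) := by
      rw [← Finset.card_univ]
      exact Finset.card_le_card_of_injOn f (fun _ _ => Finset.mem_univ _) hinj
    calc T.N = T.rows.card := rfl
      _ ≤ _ := hcard
      _ = ((k + 2) * T.W) ^ T.S := by
        rw [Fintype.card_fun]
        simp [Fintype.card_coe, Table.W, mul_comm, Fintype.card_prod]
end

section
/- For any nonempty decision table T, there exists a set D of columns of cardinality at most N(T) − 1 such that any two rows of T with different decisions differ in some column of D. -/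
open ClosedClasses

/-- Key lemma: any finite set of rows supported on `A` can be pairwise
distinguished by at most `card - 1` columns from `A`. -/
lemma aux_sep {k : ℕ} (A : Finset ℕ) :
    ∀ n (S : Finset (ℕ → Fin (k + 2))), S.card ≤ n →
      (∀ r ∈ S, ∀ a ∉ A, r a = 0) →
      ∃ D : Finset ℕ, D ⊆ A ∧ D.card ≤ S.card - 1 ∧
        ∀ r ∈ S, ∀ r' ∈ S, r ≠ r' → ∃ a ∈ D, r a ≠ r' a := by
  intro n
  induction n with
  | zero =>
    intro S hS _
    have : S = ∅ := Finset.card_eq_zero.mp (Nat.le_zero.mp hS)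
    subst this
    exact ⟨∅, by simp, by simp, by simp⟩
  | succ n ih =>
    intro S hS hsupp
    by_cases hconst : ∀ r ∈ S, ∀ r' ∈ S, r = r'
    · exact ⟨∅, by simp, by simp,
        fun r hr r' hr' hne => absurd (hconst r hr r' hr') hne⟩
    · push_neg at hconst
      obtain ⟨r, hr, r', hr', hne⟩ := hconst
      obtain ⟨a, ha⟩ : ∃ a, r a ≠ r' a := by
        by_contra hcon; push_neg at hcon; exact hne (funext hcon)
      have haA : a ∈ A := by
        by_contra haA
        exact ha (by rw [hsupp r hr a haA, hsupp r' hr' a haA])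
      set S₁ := S.filter (fun s => s a = r a) with hS₁
      set S₂ := S.filter (fun s => ¬ s a = r a) with hS₂
      have hsub₁ : S₁ ⊆ S := Finset.filter_subset _ _
      have hsub₂ : S₂ ⊆ S := Finset.filter_subset _ _
      have hr₁ : r ∈ S₁ := Finset.mem_filter.mpr ⟨hr, rfl⟩
      have hr₂ : r' ∈ S₂ := Finset.mem_filter.mpr ⟨hr', fun hc => ha hc.symm⟩
      have hcards : S₁.card + S₂.card = S.card :=
        Finset.card_filter_add_card_filter_not _
      have hlt₁ : S₁.card < S.card :=
        Finset.card_lt_card ⟨hsub₁, fun hcon => by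
          have := Finset.mem_filter.mp (hcon hr'); exact ha this.2.symm⟩
      have hlt₂ : S₂.card < S.card :=
        Finset.card_lt_card ⟨hsub₂, fun hcon => by
          exact (Finset.mem_filter.mp (hcon hr)).2 rfl⟩
      obtain ⟨D₁, hD₁A, hD₁c, hD₁s⟩ :=
        ih S₁ (by omega) (fun s hs => hsupp s (hsub₁ hs))
      obtain ⟨D₂, hD₂A, hD₂c, hD₂s⟩ :=
        ih S₂ (by omega) (fun s hs => hsupp s (hsub₂ hs))
      refine ⟨insert a (D₁ ∪ D₂), ?_, ?_, ?_⟩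
      · intro x hx
        rcases Finset.mem_insert.mp hx with h | h
        · exact h ▸ haA
        · rcases Finset.mem_union.mp h with h | h
          · exact hD₁A h
          · exact hD₂A h
      · have hc1 : 1 ≤ S₁.card := Finset.card_pos.mpr ⟨r, hr₁⟩
        have hc2 : 1 ≤ S₂.card := Finset.card_pos.mpr ⟨r', hr₂⟩
        calc (insert a (D₁ ∪ D₂)).card ≤ (D₁ ∪ D₂).card + 1 :=
              Finset.card_insert_le _ _
          _ ≤ D₁.card + D₂.card + 1 := by
              have := Finset.card_union_le D₁ D₂; omega
          _ ≤ S.card - 1 := by omega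
      · intro s hs s' hs' hne'
        by_cases h1 : s a = r a <;> by_cases h2 : s' a = r a
        · obtain ⟨b, hb, hbne⟩ := hD₁s s (Finset.mem_filter.mpr ⟨hs, h1⟩)
            s' (Finset.mem_filter.mpr ⟨hs', h2⟩) hne'
          exact ⟨b, Finset.mem_insert.mpr (Or.inr (Finset.mem_union_left _ hb)), hbne⟩
        · exact ⟨a, Finset.mem_insert_self _ _, fun hc => h2 (hc ▸ h1)⟩
        · exact ⟨a, Finset.mem_insert_self _ _, fun hc => h1 (hc ▸ h2)⟩
        · obtain ⟨b, hb, hbne⟩ := hD₂s s (Finset.mem_filter.mpr ⟨hs, h1⟩)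
            s' (Finset.mem_filter.mpr ⟨hs', h2⟩) hne'
          exact ⟨b, Finset.mem_insert.mpr (Or.inr (Finset.mem_union_right _ hb)), hbne⟩

/-- every nonempty decision table has a test of cardinality at
most `N(T) - 1`. -/
theorem exists_small_test (k : ℕ) (T : Table k) (h : T.rows.Nonempty) :
    ∃ D : Finset ℕ, T.IsTest D ∧ D.card ≤ T.N - 1 := by
  obtain ⟨D, hDA, hDc, hDs⟩ :=
    aux_sep T.attrs T.rows.card T.rows le_rfl T.supp
  refine ⟨D, ⟨hDA, fun r hr r' hr' hdec => ?_⟩, hDc⟩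
  exact hDs r hr r' hr' (fun hc => hdec (hc ▸ rfl))
end

section
/- Let ψ be a complexity measure and T a decision table with at least two rows. Then there exists a table T* in the closure [T] of T under removal of columns and changing of decisions such that ψ^d(T*) = W_ψ(T*) = S_ψ(T*) = S_ψ(T) and ψ^s(T*) ≤ V_ψ(T), where ψ^d and ψ^s are the minimum ψ-complexities of deterministic and strongly nondeterministic decision trees, W_ψ(T*) = ψ(P(T*)), S_ψ is the separation complexity parameter, and V_ψ(T) = max{ψ(f_i) : f_i ∈ P(T)}. -/
open ClosedClasses

namespace Lemma12Aux

open ClosedClasses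

/-- ψ is monotone with respect to subpermutation. -/
lemma psi_subperm (ψ : CMeasure) {l₁ l₂ : List ℕ} (h : List.Subperm l₁ l₂) :
    ψ.ψ l₁ ≤ ψ.ψ l₂ := by
  obtain ⟨l, hp, hs⟩ := h
  obtain ⟨t, ht⟩ := hs.exists_perm_append
  calc ψ.ψ l₁ = ψ.ψ l := ψ.perm _ _ hp.symm
    _ ≤ ψ.ψ (l ++ t) := ψ.mono _ _
    _ = ψ.ψ l₂ := (ψ.perm _ _ ht).symm

lemma setCost_mono (ψ : CMeasure) {D' D : Finset ℕ} (h : D' ⊆ D) :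
    ψ.setCost D' ≤ ψ.setCost D := by
  refine psi_subperm ψ (List.subperm_of_subset (Finset.sort_nodup _ _) ?_)
  intro a ha
  rw [Finset.mem_sort] at ha ⊢
  exact h ha

lemma setCost_toFinset_le (ψ : CMeasure) (l : List ℕ) :
    ψ.setCost l.toFinset ≤ ψ.ψ l := by
  refine psi_subperm ψ (List.subperm_of_subset (Finset.sort_nodup _ _) ?_)
  intro a ha
  rw [Finset.mem_sort] at ha
  exact List.mem_toFinset.mp ha

variable {k : ℕ}

/-- A tree querying the attributes in `L` in order, then deciding via `f`. -/
def mkTree : List ℕ → ((ℕ → Fin (k + 2)) → Bool) → DT k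
  | [], f => .leaf (f fun _ => 0)
  | a :: L, f => .node a fun v => mkTree L fun r => f (Function.update r a v)

def DependsOn (L : List ℕ) (f : (ℕ → Fin (k + 2)) → Bool) : Prop :=
  ∀ r r' : ℕ → Fin (k + 2), (∀ x ∈ L, r x = r' x) → f r = f r'

lemma mkTree_eval (L : List ℕ) (f : (ℕ → Fin (k + 2)) → Bool)
    (hf : DependsOn L f) (r : ℕ → Fin (k + 2)) :
    (mkTree L f).eval r = f r := by
  induction L generalizing f with
  | nil => exact hf _ _ (by simp)
  | cons a L ih =>
    show (mkTree L fun r' => f (Function.update r' a (r a))).eval r = f r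
    rw [ih _ ?_]
    · rw [show Function.update r a (r a) = r from Function.update_eq_self a r]
    · intro r₁ r₂ hagree
      refine hf _ _ ?_
      intro x hx
      rcases eq_or_ne x a with rfl | hxa
      · simp
      · rcases List.mem_cons.mp hx with h | h
        · exact absurd h hxa
        · simp [Function.update_of_ne hxa, hagree x h]

lemma mkTree_attrSet (L : List ℕ) (f : (ℕ → Fin (k + 2)) → Bool) :
    (mkTree L f).attrSet ⊆ L.toFinset := by
  induction L generalizing f with
  | nil => simp [mkTree, DT.attrSet]
  | cons a L ih =>
    show insert a (Finset.univ.biUnion fun i => (mkTree L _).attrSet) ⊆ _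
    intro x hx
    rcases Finset.mem_insert.mp hx with rfl | hx
    · simp
    · obtain ⟨i, _, hxi⟩ := Finset.mem_biUnion.mp hx
      simp only [List.toFinset_cons, Finset.mem_insert]
      exact Or.inr (ih _ hxi)

lemma mkTree_cost (ψ : List ℕ → ℕ) (L : List ℕ) (f : (ℕ → Fin (k + 2)) → Bool)
    (w : List ℕ) : (mkTree L f).cost ψ w = ψ (L.reverse ++ w) := by
  induction L generalizing f w with
  | nil => rfl
  | cons a L ih =>
    show (Finset.univ.sup fun i : Fin (k + 2) => (mkTree L _).cost ψ (a :: w)) = _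
    have : ∀ i : Fin (k + 2),
        (mkTree L fun r => f (Function.update r a i)).cost ψ (a :: w)
          = ψ (L.reverse ++ (a :: w)) := fun i => ih _ _
    simp only [this]
    rw [Finset.sup_const Finset.univ_nonempty]
    congr 1
    simp

/-- The word of attributes queried along the path followed by `r`. -/
def pathWord : DT k → (ℕ → Fin (k + 2)) → List ℕ
  | .leaf _, _ => []
  | .node a ch, r => a :: pathWord (ch (r a)) r

lemma pathWord_subset (Γ : DT k) (r : ℕ → Fin (k + 2)) :
    ∀ x ∈ pathWord Γ r, x ∈ Γ.attrSet := by
  induction Γ with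
  | leaf b => simp [pathWord]
  | node a ch ih =>
    intro x hx
    rcases List.mem_cons.mp hx with rfl | hx
    · simp [DT.attrSet]
    · simp only [DT.attrSet, Finset.mem_insert, Finset.mem_biUnion]
      exact Or.inr ⟨r a, Finset.mem_univ _, ih _ _ hx⟩

lemma eval_eq_of_agree (Γ : DT k) (r r' : ℕ → Fin (k + 2))
    (h : ∀ x ∈ pathWord Γ r, r' x = r x) : Γ.eval r' = Γ.eval r := by
  induction Γ with
  | leaf b => rfl
  | node a ch ih =>
    have ha : r' a = r a := h a (by simp [pathWord])
    show (ch (r' a)).eval r' = (ch (r a)).eval r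
    rw [ha]
    exact ih (r a) fun x hx => h x (List.mem_cons_of_mem _ hx)

lemma cost_ge_path (ψ : CMeasure) (Γ : DT k) (r : ℕ → Fin (k + 2)) (w : List ℕ) :
    ψ.ψ ((pathWord Γ r).reverse ++ w) ≤ Γ.cost ψ.ψ w := by
  induction Γ generalizing w with
  | leaf b => exact le_refl _
  | node a ch ih =>
    have h1 : ψ.ψ ((pathWord (DT.node a ch) r).reverse ++ w)
        = ψ.ψ ((pathWord (ch (r a)) r).reverse ++ (a :: w)) := by
      congr 1
      simp [pathWord]
    rw [h1]
    calc ψ.ψ ((pathWord (ch (r a)) r).reverse ++ (a :: w))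
        ≤ (ch (r a)).cost ψ.ψ (a :: w) := ih (r a) (a :: w)
      _ ≤ Finset.univ.sup (fun i : Fin (k+2) => (ch i).cost ψ.ψ (a :: w)) :=
          Finset.le_sup (f := fun i : Fin (k+2) => (ch i).cost ψ.ψ (a :: w)) (Finset.mem_univ (r a))
      _ = (DT.node a ch).cost ψ.ψ w := rfl

end Lemma12Aux

open Lemma12Aux

/-- Lemma 12: for any complexity measure `ψ` and table `T` with
at least two rows, there is `T* ∈ [T]` with
`ψ^d(T*) = W_ψ(T*) = S_ψ(T*) = S_ψ(T)` and `ψ^s(T*) ≤ V_ψ(T)`. -/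
theorem exists_closure_table_lemma12 (k : ℕ) (ψ : CMeasure) (T : Table k)
    (h : 2 ≤ T.N) :
    ∃ T' : Table k, InClosure T' T ∧
      psid ψ.ψ T' = T'.Wpsi ψ ∧ T'.Wpsi ψ = T'.Spsi ψ ∧
      T'.Spsi ψ = T.Spsi ψ ∧ psis ψ.ψ T' ≤ T.Vpsi ψ := by
  classical
  have hrows : T.rows.Nonempty := Finset.card_pos.mp (by
    have : T.N = T.rows.card := rfl
    omega)
  -- `T.attrs` separates every row of `T`
  have hsepall : ∀ r ∈ T.rows, T.Separates T.attrs r := by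
    intro r hr
    refine ⟨subset_rfl, fun r' hr' hne => ?_⟩
    by_contra hc
    push_neg at hc
    apply hne
    funext a
    by_cases ha : a ∈ T.attrs
    · exact (hc a ha).symm
    · rw [T.supp r' hr' a ha, T.supp r hr a ha]
  have hbound : ∀ r ∈ T.rows, T.Spsirow ψ r ≤ ψ.setCost T.attrs := fun r hr =>
    Nat.sInf_le ⟨T.attrs, hsepall r hr, rfl⟩
  -- choose a row `δ` attaining `S_ψ(T)`
  have hSdef : T.Spsi ψ = sSup {m | ∃ r ∈ T.rows, T.Spsirow ψ r = m} := rfl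
  have hSne : {m | ∃ r ∈ T.rows, T.Spsirow ψ r = m}.Nonempty :=
    ⟨_, hrows.choose, hrows.choose_spec, rfl⟩
  have hSbdd : BddAbove {m | ∃ r ∈ T.rows, T.Spsirow ψ r = m} :=
    ⟨ψ.setCost T.attrs, fun m ⟨r, hr, hm⟩ => hm ▸ hbound r hr⟩
  obtain ⟨δ, hδ, hδS⟩ := Nat.sSup_mem hSne hSbdd
  -- choose a minimum-cost separating set `D` for `δ`
  have hrowdef : T.Spsirow ψ δ
      = sInf {m | ∃ D, T.Separates D δ ∧ ψ.setCost D = m} := rfl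
  have hrowne : {m | ∃ D, T.Separates D δ ∧ ψ.setCost D = m}.Nonempty :=
    ⟨_, T.attrs, hsepall δ hδ, rfl⟩
  obtain ⟨D, hDsep, hDcost⟩ := Nat.sInf_mem hrowne
  obtain ⟨hDsub, hDsepδ⟩ := hDsep
  have hDval : ψ.setCost D = T.Spsi ψ := by rw [hDcost, ← hrowdef, hδS, ← hSdef]
  set δ' := restrict D δ with hδ'def
  have hδ'D : ∀ a ∈ D, δ' a = δ a := fun a ha => by simp [hδ'def, restrict, ha]
  have hδ'nD : ∀ a ∉ D, δ' a = 0 := fun a ha => by simp [hδ'def, restrict, ha]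
  -- the table T*
  have hsupp0 : ∀ r ∈ T.rows.image (restrict D), ∀ a ∉ D, r a = 0 := by
    intro r hr a ha
    obtain ⟨r₀, _, rfl⟩ := Finset.mem_image.mp hr
    simp [restrict, ha]
  set T' : Table k := ⟨D, T.rows.image (restrict D),
      fun r => if r = δ' then false else true, hsupp0⟩ with hT'def
  refine ⟨T', ⟨hDsub, by rw [hT'def, Finset.coe_image]⟩, ?_⟩
  have hδ'mem : δ' ∈ T'.rows := Finset.mem_image_of_mem _ hδ
  have hsupp' : ∀ r ∈ T'.rows, ∀ a ∉ D, r a = 0 := T'.supp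
  -- restriction separates: rows of T ≠ δ restrict to rows ≠ δ'
  have hkey : ∀ r ∈ T.rows, r ≠ δ → restrict D r ≠ δ' := by
    intro r hr hne heq
    obtain ⟨a, haD, hna⟩ := hDsepδ r hr hne
    apply hna
    have h1 := congrFun heq a
    rw [hδ'D a haD] at h1
    simpa [restrict, haD] using h1.symm
  -- D separates every row of T'
  have hD_sepT' : ∀ r ∈ T'.rows, T'.Separates D r := by
    intro r hr
    refine ⟨subset_rfl, fun r' hr' hne => ?_⟩
    by_contra hc
    push_neg at hc
    apply hne
    funext a
    by_cases ha : a ∈ D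
    · exact (hc a ha).symm
    · rw [hsupp' r' hr' a ha, hsupp' r hr a ha]
  -- any set separating δ' in T' separates δ in T
  have hsep_lift : ∀ D' : Finset ℕ, T'.Separates D' δ' → T.Separates D' δ := by
    intro D' hD'
    obtain ⟨hsub', hsep'⟩ := hD'
    refine ⟨hsub'.trans hDsub, fun r hr hne => ?_⟩
    obtain ⟨a, ha, hd⟩ := hsep' (restrict D r) (Finset.mem_image_of_mem _ hr)
      (hkey r hr hne)
    have haD : a ∈ D := hsub' ha
    refine ⟨a, ha, ?_⟩
    intro hcon
    apply hd
    rw [hδ'D a haD]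
    simp [restrict, haD, hcon]
  have hminD : ∀ D' : Finset ℕ, T'.Separates D' δ' → ψ.setCost D ≤ ψ.setCost D' := by
    intro D' h'
    have h1 : T.Spsirow ψ δ ≤ ψ.setCost D' := Nat.sInf_le ⟨D', hsep_lift D' h', rfl⟩
    rw [hDcost]
    exact h1
  -- S_ψ(T', δ') = setCost D
  have hSrow' : T'.Spsirow ψ δ' = ψ.setCost D := by
    refine le_antisymm (Nat.sInf_le ⟨D, hD_sepT' δ' hδ'mem, rfl⟩) ?_
    refine le_csInf ⟨_, D, hD_sepT' δ' hδ'mem, rfl⟩ ?_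
    rintro m ⟨D', hD', rfl⟩
    exact hminD D' hD'
  have hSrowle : ∀ r ∈ T'.rows, T'.Spsirow ψ r ≤ ψ.setCost D := fun r hr =>
    Nat.sInf_le ⟨D, hD_sepT' r hr, rfl⟩
  -- S_ψ(T') = setCost D
  have hSpsi' : T'.Spsi ψ = ψ.setCost D := by
    have hne' : {m | ∃ r ∈ T'.rows, T'.Spsirow ψ r = m}.Nonempty :=
      ⟨_, δ', hδ'mem, rfl⟩
    have hbdd' : BddAbove {m | ∃ r ∈ T'.rows, T'.Spsirow ψ r = m} :=
      ⟨ψ.setCost D, fun m ⟨r, hr, hm⟩ => hm ▸ hSrowle r hr⟩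
    refine le_antisymm ?_ ?_
    · obtain ⟨r, hr, hrv⟩ := Nat.sSup_mem hne' hbdd'
      calc T'.Spsi ψ = T'.Spsirow ψ r := hrv.symm
        _ ≤ ψ.setCost D := hSrowle r hr
    · calc ψ.setCost D = T'.Spsirow ψ δ' := hSrow'.symm
        _ ≤ T'.Spsi ψ := le_csSup hbdd' ⟨δ', hδ'mem, rfl⟩
  -- dec of rows of T' in terms of values on D
  have hdec_iff : ∀ r ∈ T'.rows, (r = δ' ↔ ∀ a ∈ D, r a = δ' a) := by
    intro r hr
    constructor
    · intro h a _; rw [h]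
    · intro h
      funext a
      by_cases ha : a ∈ D
      · exact h a ha
      · rw [hsupp' r hr a ha, hδ'nD a ha]
  -- the deterministic tree querying all of D
  set L : List ℕ := D.sort (· ≤ ·) with hLdef
  set f : (ℕ → Fin (k + 2)) → Bool :=
    fun r => if ∀ a ∈ D, r a = δ' a then false else true with hfdef
  have hfdep : DependsOn L f := by
    intro r₁ r₂ hagree
    have : (∀ a ∈ D, r₁ a = δ' a) ↔ (∀ a ∈ D, r₂ a = δ' a) := by
      constructor <;> intro h a ha
      · rw [← hagree a (by rwa [hLdef, Finset.mem_sort])]; exact h a ha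
      · rw [hagree a (by rwa [hLdef, Finset.mem_sort])]; exact h a ha
    simp only [hfdef]
    rw [if_congr this rfl rfl]
  have hΓ : IsDT T' (mkTree L f) := by
    constructor
    · refine (mkTree_attrSet L f).trans ?_
      rw [hLdef, Finset.sort_toFinset]
    · intro r hr
      rw [mkTree_eval L f hfdep r]
      show f r = (if r = δ' then false else true)
      simp only [hfdef]
      rw [if_congr (hdec_iff r hr).symm rfl rfl]
  have hΓcost : (mkTree L f).cost ψ.ψ [] = ψ.setCost D := by
    rw [mkTree_cost ψ.ψ L f []]
    rw [List.append_nil]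
    exact ψ.perm _ _ (List.reverse_perm L)
  -- lower bound for any deterministic tree for T'
  have hlow : ∀ Γ : DT k, IsDT T' Γ → ψ.setCost D ≤ Γ.cost ψ.ψ [] := by
    intro Γ hΓ'
    set pw := pathWord Γ δ' with hpwdef
    have hAsep : T'.Separates pw.toFinset δ' := by
      constructor
      · intro a ha
        exact hΓ'.1 (pathWord_subset Γ δ' a (List.mem_toFinset.mp ha))
      · intro r' hr' hne
        by_contra hc
        push_neg at hc
        have hagree : ∀ x ∈ pw, r' x = δ' x := fun x hx =>
          (hc x (List.mem_toFinset.mpr hx)).symm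
        have heval : Γ.eval r' = Γ.eval δ' := eval_eq_of_agree Γ δ' r' hagree
        have h1 : Γ.eval r' = T'.dec r' := hΓ'.2 r' hr'
        have h2 : Γ.eval δ' = T'.dec δ' := hΓ'.2 δ' hδ'mem
        have hd1 : T'.dec r' = true := by
          show (if r' = δ' then false else true) = true
          rw [if_neg hne]
        have hd2 : T'.dec δ' = false := by
          show (if δ' = δ' then false else true) = false
          rw [if_pos rfl]
        rw [h1, h2, hd1, hd2] at heval
        exact Bool.noConfusion heval
    calc ψ.setCost D ≤ ψ.setCost pw.toFinset := hminD _ hAsep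
      _ ≤ ψ.ψ pw := setCost_toFinset_le ψ pw
      _ = ψ.ψ (pw.reverse ++ []) := by
          rw [List.append_nil]; exact ψ.perm _ _ (List.reverse_perm pw).symm
      _ ≤ Γ.cost ψ.ψ [] := cost_ge_path ψ Γ δ' []
  -- ψ^d(T') = setCost D
  have hpsid : psid ψ.ψ T' = ψ.setCost D := by
    have hub : psid ψ.ψ T' ≤ ψ.setCost D := by
      have := Nat.sInf_le (s := {m | ∃ Γ : DT k, IsDT T' Γ ∧ Γ.cost ψ.ψ [] = m})
        ⟨mkTree L f, hΓ, rfl⟩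
      rw [hΓcost] at this
      exact this
    refine le_antisymm hub ?_
    obtain ⟨Γ₀, hΓ₀, hc₀⟩ :=
      Nat.sInf_mem (s := {m | ∃ Γ : DT k, IsDT T' Γ ∧ Γ.cost ψ.ψ [] = m})
        ⟨_, mkTree L f, hΓ, rfl⟩
    calc ψ.setCost D ≤ Γ₀.cost ψ.ψ [] := hlow Γ₀ hΓ₀
      _ = psid ψ.ψ T' := hc₀
  -- ψ^s(T') ≤ V_ψ(T)
  have hV : ∀ a ∈ T.attrs, ψ.ψ [a] ≤ T.Vpsi ψ := by
    intro a ha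
    have hfin : {m | ∃ a ∈ T.attrs, ψ.ψ [a] = m}.Finite := by
      have : {m | ∃ a ∈ T.attrs, ψ.ψ [a] = m}
          = ↑(T.attrs.image fun a => ψ.ψ [a]) := by
        ext m
        simp [eq_comm]
      rw [this]
      exact (T.attrs.image fun a => ψ.ψ [a]).finite_toSet
    exact le_csSup hfin.bddAbove ⟨a, ha, rfl⟩
  have hpsis : psis ψ.ψ T' ≤ T.Vpsi ψ := by
    set g : (ℕ → Fin (k + 2)) → List (ℕ × Fin (k + 2)) :=
      fun r => if h : ∃ a ∈ D, r a ≠ δ' a then [(h.choose, r h.choose)] else []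
      with hgdef
    have hgood : ∀ r ∈ T'.rows, r ≠ δ' → ∃ a ∈ D, r a ≠ δ' a := by
      intro r hr hne
      by_contra hc
      push_neg at hc
      exact hne ((hdec_iff r hr).mpr hc)
    set R : Finset (List (ℕ × Fin (k + 2))) :=
      (T'.rows.filter fun r => r ≠ δ').image g with hRdef
    have hRmem : ∀ rule ∈ R, ∃ r ∈ T'.rows, r ≠ δ' ∧
        ∃ (h : ∃ a ∈ D, r a ≠ δ' a), rule = [(h.choose, r h.choose)] := by
      intro rule hrule
      obtain ⟨r, hr, rfl⟩ := Finset.mem_image.mp hrule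
      have hr' := Finset.mem_filter.mp hr
      have h := hgood r hr'.1 hr'.2
      exact ⟨r, hr'.1, hr'.2, h, by simp [hgdef, dif_pos h]⟩
    have hSNDT : IsSNDT T' R := by
      refine ⟨?_, ?_, ?_⟩
      · intro rule hrule p hp
        obtain ⟨r, hr, hne, h, rfl⟩ := hRmem rule hrule
        rw [List.mem_singleton] at hp
        rw [hp]
        exact h.choose_spec.1
      · intro r hr hdec
        have hne : r ≠ δ' := by
          intro heq
          rw [show T'.dec r = (if r = δ' then false else true) from rfl,
            if_pos heq] at hdec
          exact Bool.noConfusion hdec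
        have h := hgood r hr hne
        refine ⟨g r, Finset.mem_image_of_mem g (Finset.mem_filter.mpr ⟨hr, hne⟩), ?_⟩
        intro p hp
        rw [hgdef] at hp
        simp only [dif_pos h] at hp
        rw [List.mem_singleton] at hp
        rw [hp]
      · intro rule hrule r' hr' hsat
        obtain ⟨r, hr, hne, h, rfl⟩ := hRmem rule hrule
        have hval : r' h.choose = r h.choose :=
          hsat (h.choose, r h.choose) (List.mem_singleton.mpr rfl)
        have hne' : r' ≠ δ' := by
          intro heq
          exact h.choose_spec.2 (by rw [← hval, heq])
        show (if r' = δ' then false else true) = true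
        rw [if_neg hne']
    have hsup : R.sup (fun rule => ψ.ψ (rule.map Prod.fst)) ≤ T.Vpsi ψ := by
      refine Finset.sup_le ?_
      intro rule hrule
      obtain ⟨r, hr, hne, h, rfl⟩ := hRmem rule hrule
      simp only [List.map_cons, List.map_nil]
      exact hV h.choose (hDsub h.choose_spec.1)
    calc psis ψ.ψ T' ≤ R.sup (fun rule => ψ.ψ (rule.map Prod.fst)) :=
          Nat.sInf_le ⟨R, hSNDT, rfl⟩
      _ ≤ T.Vpsi ψ := hsup
  -- assemble
  have hW : T'.Wpsi ψ = ψ.setCost D := rfl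
  refine ⟨?_, ?_, ?_, ?_⟩
  · rw [hpsid, hW]
  · rw [hW, hSpsi']
  · rw [hSpsi', hDval]
  · exact hpsis
end

section
/- For any complexity measure ψ and any decision table T, if M_ψ(T) ≥ 1 then ψ^d(T) ≤ M_ψ(T)·log₂(N(T)), and if M_ψ(T) = 0 then ψ^d(T) = 0; moreover the lower bound ψ^d(T) ≥ M_ψ(T) always holds. -/
open ClosedClasses

/-!
Upper bound: let `δ` take in every column a most frequent value among the current rows, and let
`p` be a word of `ψ`-value at most `M_ψ(T)` whose fixation along `δ` makes the decisions constant.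
The tree queries the attributes of `p` in order; a row that leaves `p` at some attribute has a
non-majority value there, so it lands in a subtable with at most half of the rows, which is handled
recursively. Every halving thus costs at most `M_ψ(T)`, and subadditivity of `ψ` gives the bound
`M_ψ(T) · log₂ N(T)`.

Lower bound: following `δ` through any decision tree for `T` produces a word whose fixation along
`δ` pins down the answer of the tree, hence the decision; its `ψ`-value is at most the cost of the
tree.
-/

theorem Finset.exists_forall_ne_two_mul_card_filter_le {β α : Type*} [Fintype α] [Nonempty α]
    [DecidableEq α] (Q : Finset β) (f : β → α) :
    ∃ σ, ∀ τ ≠ σ, 2 * (Q.filter (f · = τ)).card ≤ Q.card := by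
  classical
  obtain ⟨σ, -, hσ⟩ := Finset.exists_max_image Finset.univ (fun σ => (Q.filter (f · = σ)).card)
    Finset.univ_nonempty
  refine ⟨σ, fun τ hτ => ?_⟩
  have hdisj : Disjoint (Q.filter (f · = τ)) (Q.filter (f · = σ)) :=
    Finset.disjoint_filter.mpr fun _ _ h h' => hτ (h.symm.trans h')
  have hunion := Finset.card_le_card
    (Finset.union_subset (Finset.filter_subset (f · = τ) Q) (Finset.filter_subset (f · = σ) Q))
  rw [Finset.card_union_of_disjoint hdisj] at hunion
  have := hσ τ (Finset.mem_univ τ)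
  omega

theorem Nat.log_two_le_log_two_sub_one_of_two_mul_le {m n : ℕ} (h : 2 * m ≤ n) :
    Nat.log 2 m ≤ Nat.log 2 n - 1 :=
  (Nat.log_mono_right ((Nat.le_div_iff_mul_le two_pos).mpr (by omega))).trans_eq
    (Nat.log_div_base 2 n)

namespace ClosedClasses

variable {k : ℕ}

lemma CMeasure.le_of_sublist (ψ : CMeasure) {w₁ w₂ : List ℕ} (h : w₁.Sublist w₂) :
    ψ.ψ w₁ ≤ ψ.ψ w₂ := by
  obtain ⟨u, hu⟩ := h.exists_perm_append
  rw [ψ.perm _ _ hu]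
  exact ψ.mono w₁ u

lemma ruleSat_cons {q : ℕ × Fin (k + 2)} {p : List (ℕ × Fin (k + 2))} {r : ℕ → Fin (k + 2)} :
    RuleSat (q :: p) r ↔ r q.1 = q.2 ∧ RuleSat p r := by
  simp [RuleSat]

lemma ruleSat_append_singleton {q : ℕ × Fin (k + 2)} {p : List (ℕ × Fin (k + 2))}
    {r : ℕ → Fin (k + 2)} : RuleSat (p ++ [q]) r ↔ RuleSat p r ∧ r q.1 = q.2 := by
  simp [RuleSat, or_imp, forall_and]

section Mpsi

noncomputable def fullWord (T : Table k) (δ : ℕ → Fin (k + 2)) : List (ℕ × Fin (k + 2)) :=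
  T.attrs.toList.map fun a => (a, δ a)

lemma fullWord_fixConst (T : Table k) (δ : ℕ → Fin (k + 2)) : FixConst T (fullWord T δ) := by
  intro r hr r' hr' h h'
  suffices r = r' by rw [this]
  funext a
  by_cases ha : a ∈ T.attrs
  · have hmem : (a, δ a) ∈ fullWord T δ := List.mem_map.mpr ⟨a, Finset.mem_toList.mpr ha, rfl⟩
    rw [h _ hmem, h' _ hmem]
  · rw [T.supp r hr a ha, T.supp r' hr' a ha]

lemma exists_word_eq_Mpsirow (ψ : CMeasure) (T : Table k) (δ : ℕ → Fin (k + 2)) :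
    ∃ p : List (ℕ × Fin (k + 2)), (∀ q ∈ p, q.1 ∈ T.attrs ∧ q.2 = δ q.1) ∧ FixConst T p ∧
      ψ.ψ (p.map Prod.fst) = Mpsirow ψ T δ := by
  have hne : {m | ∃ p : List (ℕ × Fin (k + 2)), (∀ q ∈ p, q.1 ∈ T.attrs ∧ q.2 = δ q.1) ∧
      FixConst T p ∧ ψ.ψ (p.map Prod.fst) = m}.Nonempty := by
    refine ⟨_, fullWord T δ, fun q hq => ?_, fullWord_fixConst T δ, rfl⟩
    obtain ⟨a, ha, rfl⟩ := List.mem_map.mp hq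
    exact ⟨Finset.mem_toList.mp ha, rfl⟩
  exact Nat.sInf_mem hne

lemma Mpsirow_le (ψ : CMeasure) (T : Table k) (δ : ℕ → Fin (k + 2))
    {p : List (ℕ × Fin (k + 2))} (hp : ∀ q ∈ p, q.1 ∈ T.attrs ∧ q.2 = δ q.1)
    (hfix : FixConst T p) : Mpsirow ψ T δ ≤ ψ.ψ (p.map Prod.fst) :=
  Nat.sInf_le ⟨p, hp, hfix, rfl⟩

lemma Mpsirow_le_Mpsi (ψ : CMeasure) (T : Table k) {δ : ℕ → Fin (k + 2)}
    (hδ : ∀ a ∉ T.attrs, δ a = 0) : Mpsirow ψ T δ ≤ Mpsi ψ T := by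
  refine le_csSup ⟨ψ.ψ T.attrs.toList, ?_⟩ ⟨δ, hδ, rfl⟩
  rintro _ ⟨δ', -, rfl⟩
  have hfull := Mpsirow_le ψ T δ' (p := fullWord T δ')
    (fun q hq => by obtain ⟨a, ha, rfl⟩ := List.mem_map.mp hq; exact ⟨Finset.mem_toList.mp ha, rfl⟩)
    (fullWord_fixConst T δ')
  simpa [fullWord, List.map_map, Function.comp_def] using hfull

end Mpsi

def DecidesOn (T : Table k) (Q : Finset (ℕ → Fin (k + 2))) (Γ : DT k) : Prop :=
  Γ.attrSet ⊆ T.attrs ∧ ∀ r ∈ Q, Γ.eval r = T.dec r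

section UpperBound

variable {T : Table k} {Q Q' : Finset (ℕ → Fin (k + 2))}

lemma DecidesOn.mono {Γ : DT k} (h : DecidesOn T Q Γ) (hQ : Q' ⊆ Q) : DecidesOn T Q' Γ :=
  ⟨h.1, fun r hr => h.2 r (hQ hr)⟩

lemma exists_leaf_decidesOn (hconst : ∀ r ∈ Q, ∀ r' ∈ Q, T.dec r = T.dec r') :
    ∃ b, DecidesOn T Q (DT.leaf b) := by
  by_cases hQ : Q.Nonempty
  · exact ⟨T.dec hQ.choose, by simp [DT.attrSet], fun r hr => hconst _ hQ.choose_spec r hr⟩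
  · exact ⟨true, by simp [DT.attrSet], fun r hr => absurd ⟨r, hr⟩ hQ⟩

lemma decidesOn_node {a : ℕ} {ch : Fin (k + 2) → DT k} (ha : a ∈ T.attrs)
    (hch : ∀ σ, DecidesOn T (Q.filter (· a = σ)) (ch σ)) : DecidesOn T Q (DT.node a ch) := by
  refine ⟨?_, fun r hr => (hch (r a)).2 r (Finset.mem_filter.mpr ⟨hr, rfl⟩)⟩
  simp only [DT.attrSet, Finset.insert_subset_iff, Finset.biUnion_subset]
  exact ⟨ha, fun σ _ => (hch σ).1⟩

lemma exists_decidesOn_along_word (ψ : CMeasure) (B : ℕ) (p : List (ℕ × Fin (k + 2)))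
    (hp : ∀ q ∈ p, q.1 ∈ T.attrs)
    (hconst : ∀ r ∈ Q, ∀ r' ∈ Q, RuleSat p r → RuleSat p r' → T.dec r = T.dec r')
    (hleave : ∀ q ∈ p, ∀ σ ≠ q.2, ∃ Γ, DecidesOn T (Q.filter (· q.1 = σ)) Γ ∧
      ∀ w, Γ.cost ψ.ψ w ≤ ψ.ψ w + B) :
    ∃ Γ, DecidesOn T Q Γ ∧ ∀ w, Γ.cost ψ.ψ w ≤ ψ.ψ (p.map Prod.fst ++ w) + B := by
  induction p generalizing Q with
  | nil =>
    obtain ⟨b, hb⟩ := exists_leaf_decidesOn fun r hr r' hr' =>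
      hconst r hr r' hr' (by simp [RuleSat]) (by simp [RuleSat])
    exact ⟨DT.leaf b, hb, fun w => Nat.le_add_right _ _⟩
  | cons q p ih =>
    obtain ⟨Γstay, hstay, hstayCost⟩ := ih (Q := Q.filter (· q.1 = q.2))
      (fun q' hq' => hp q' (List.mem_cons_of_mem q hq'))
      (fun r hr r' hr' hs hs' => by
        rw [Finset.mem_filter] at hr hr'
        exact hconst r hr.1 r' hr'.1 (ruleSat_cons.mpr ⟨hr.2, hs⟩) (ruleSat_cons.mpr ⟨hr'.2, hs'⟩))
      (fun q' hq' σ hσ => by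
        obtain ⟨Γ, hΓ, hcost⟩ := hleave q' (List.mem_cons_of_mem q hq') σ hσ
        exact ⟨Γ, hΓ.mono (Finset.filter_subset_filter _ (Finset.filter_subset _ Q)), hcost⟩)
    choose Γleave hleaveDec hleaveCost using hleave q List.mem_cons_self
    let ch : Fin (k + 2) → DT k := fun σ => if h : σ = q.2 then Γstay else Γleave σ h
    refine ⟨DT.node q.1 ch, decidesOn_node (hp q List.mem_cons_self) fun σ => ?_, fun w => ?_⟩
    · by_cases h : σ = q.2
      · subst h; simpa [ch] using hstay
      · simpa [ch, h] using hleaveDec σ h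
    · refine Finset.sup_le fun σ _ => ?_
      by_cases h : σ = q.2
      · have hperm := ψ.perm _ _ (List.perm_middle (a := q.1) (l₁ := p.map Prod.fst) (l₂ := w))
        simpa [ch, h, hperm] using hstayCost (q.1 :: w)
      · have hsub : (q.1 :: w).Sublist (q.1 :: (p.map Prod.fst ++ w)) :=
          (List.sublist_append_right _ w).cons_cons q.1
        simpa [ch, h] using (hleaveCost σ h (q.1 :: w)).trans
          (Nat.add_le_add_right (ψ.le_of_sublist hsub) B)

theorem exists_decidesOn_cost_le_Mpsi_mul_log (ψ : CMeasure) (hQ : Q ⊆ T.rows) :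
    ∃ Γ, DecidesOn T Q Γ ∧ ∀ w, Γ.cost ψ.ψ w ≤ ψ.ψ w + Mpsi ψ T * Nat.log 2 Q.card := by
  induction hn : Q.card using Nat.strong_induction_on generalizing Q with
  | _ n ih =>
    subst hn
    by_cases hsmall : Q.card ≤ 1
    · obtain ⟨b, hb⟩ := exists_leaf_decidesOn fun r hr r' hr' =>
        congrArg T.dec (Finset.card_le_one.mp hsmall r hr r' hr')
      exact ⟨DT.leaf b, hb, fun w => Nat.le_add_right _ _⟩
    set M := Mpsi ψ T
    set L := Nat.log 2 Q.card
    have hL : 1 ≤ L := Nat.log_pos one_lt_two (by omega)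
    choose maj hmaj using fun a => Finset.exists_forall_ne_two_mul_card_filter_le Q (· a)
    let δ : ℕ → Fin (k + 2) := fun a => if a ∈ T.attrs then maj a else 0
    obtain ⟨p, hpδ, hfix, hpψ⟩ := exists_word_eq_Mpsirow ψ T δ
    have hpM : ψ.ψ (p.map Prod.fst) ≤ M := hpψ ▸ Mpsirow_le_Mpsi ψ T fun a ha => if_neg ha
    have hleave : ∀ q ∈ p, ∀ σ ≠ q.2, 2 * (Q.filter (· q.1 = σ)).card ≤ Q.card :=
      fun q hq σ hσ => hmaj q.1 σ fun h => hσ <| by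
        rw [(hpδ q hq).2, h]
        exact (if_pos (hpδ q hq).1).symm
    obtain ⟨Γ, hΓ, hcost⟩ := exists_decidesOn_along_word ψ (M * (L - 1)) p
      (fun q hq => (hpδ q hq).1) (fun r hr r' hr' => hfix r (hQ hr) r' (hQ hr'))
      (fun q hq σ hσ => by
        have hhalf := hleave q hq σ hσ
        obtain ⟨Γ, hΓ, hcost⟩ := ih (Q.filter (· q.1 = σ)).card (by omega)
          ((Finset.filter_subset _ Q).trans hQ) rfl
        have hlog := Nat.log_two_le_log_two_sub_one_of_two_mul_le hhalf
        exact ⟨Γ, hΓ, fun w => (hcost w).trans (by gcongr)⟩)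
    refine ⟨Γ, hΓ, fun w => (hcost w).trans ?_⟩
    have hsub := ψ.subadd (p.map Prod.fst) w
    have hML : M * (L - 1) + M = M * L := by
      rw [← Nat.mul_succ]
      congr 1
      omega
    omega

theorem psid_le_Mpsi_mul_log (ψ : CMeasure) (T : Table k) :
    psid ψ.ψ T ≤ Mpsi ψ T * Nat.log 2 T.N := by
  obtain ⟨Γ, hΓ, hcost⟩ := exists_decidesOn_cost_le_Mpsi_mul_log ψ (subset_refl T.rows)
  have hle : psid ψ.ψ T ≤ Γ.cost ψ.ψ [] := Nat.sInf_le ⟨Γ, hΓ, rfl⟩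
  refine hle.trans ?_
  simpa [Table.N, (ψ.pos []).mpr rfl] using hcost []

end UpperBound

section LowerBound

/-- The word lists the queried attributes in reverse order, matching the accumulator of
`DT.cost`. -/
lemma DT.exists_word_along (ψ : List ℕ → ℕ) (δ : ℕ → Fin (k + 2)) (Γ : DT k) :
    ∃ p : List (ℕ × Fin (k + 2)), (∀ q ∈ p, q.1 ∈ Γ.attrSet ∧ q.2 = δ q.1) ∧
      (∀ r, RuleSat p r → Γ.eval r = Γ.eval δ) ∧
      ∀ w, ψ (p.map Prod.fst ++ w) ≤ Γ.cost ψ w := by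
  induction Γ with
  | leaf b => exact ⟨[], by simp, fun _ _ => rfl, fun _ => le_rfl⟩
  | node a ch ih =>
    obtain ⟨p, hpδ, heval, hcost⟩ := ih (δ a)
    refine ⟨p ++ [(a, δ a)], fun q hq => ?_, fun r hr => ?_, fun w => ?_⟩
    · rcases List.mem_append.mp hq with hq | hq
      · refine ⟨?_, (hpδ q hq).2⟩
        simp only [DT.attrSet, Finset.mem_insert, Finset.mem_biUnion]
        exact Or.inr ⟨δ a, Finset.mem_univ _, (hpδ q hq).1⟩
      · obtain rfl := List.mem_singleton.mp hq
        simp [DT.attrSet]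
    · obtain ⟨hp, hra⟩ := ruleSat_append_singleton.mp hr
      show (ch (r a)).eval r = (ch (δ a)).eval δ
      rw [hra]
      exact heval r hp
    · calc ψ ((p ++ [(a, δ a)]).map Prod.fst ++ w) = ψ (p.map Prod.fst ++ a :: w) := by simp
        _ ≤ (ch (δ a)).cost ψ (a :: w) := hcost (a :: w)
        _ ≤ (DT.node a ch).cost ψ w :=
          Finset.le_sup (f := fun σ => (ch σ).cost ψ (a :: w)) (Finset.mem_univ (δ a))

lemma Mpsirow_le_cost (ψ : CMeasure) {T : Table k} {Γ : DT k} (hΓ : IsDT T Γ)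
    (δ : ℕ → Fin (k + 2)) : Mpsirow ψ T δ ≤ Γ.cost ψ.ψ [] := by
  obtain ⟨p, hpδ, heval, hcost⟩ := Γ.exists_word_along ψ.ψ δ
  have hfix : FixConst T p := fun r hr r' hr' hs hs' => by
    rw [← hΓ.2 r hr, ← hΓ.2 r' hr', heval r hs, heval r' hs']
  have hpath := hcost []
  rw [List.append_nil] at hpath
  exact (Mpsirow_le ψ T δ (fun q hq => ⟨hΓ.1 (hpδ q hq).1, (hpδ q hq).2⟩) hfix).trans hpath

theorem Mpsi_le_psid (ψ : CMeasure) (T : Table k) : Mpsi ψ T ≤ psid ψ.ψ T := by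
  obtain ⟨Γ, hΓ, -⟩ := exists_decidesOn_cost_le_Mpsi_mul_log ψ (subset_refl T.rows)
  have hne : {m | ∃ Γ : DT k, IsDT T Γ ∧ Γ.cost ψ.ψ [] = m}.Nonempty := ⟨_, Γ, hΓ, rfl⟩
  obtain ⟨Γopt, hΓopt, hopt⟩ := Nat.sInf_mem hne
  refine csSup_le' ?_
  rintro _ ⟨δ, -, rfl⟩
  exact (Mpsirow_le_cost ψ hΓopt δ).trans_eq hopt

end LowerBound

end ClosedClasses

open ClosedClasses

/-- Lemmas 3 and 4: `ψ^d(T) = 0` if `M_ψ(T) = 0`,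
`ψ^d(T) ≤ M_ψ(T)·log₂ N(T)` if `M_ψ(T) ≥ 1`, and always `ψ^d(T) ≥ M_ψ(T)`. -/
theorem psid_bounds_via_Mpsi (k : ℕ) (ψ : CMeasure) (T : Table k) :
    (Mpsi ψ T = 0 → psid ψ.ψ T = 0) ∧
    (1 ≤ Mpsi ψ T →
      (psid ψ.ψ T : ℝ) ≤ (Mpsi ψ T : ℝ) * Real.logb 2 (T.N : ℝ)) ∧
    Mpsi ψ T ≤ psid ψ.ψ T := by
  have hupper := psid_le_Mpsi_mul_log ψ T
  refine ⟨fun hM => by simpa [hM] using hupper, fun _ => ?_, Mpsi_le_psid ψ T⟩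
  calc (psid ψ.ψ T : ℝ) ≤ (Mpsi ψ T : ℝ) * (Nat.log 2 T.N : ℝ) := by exact_mod_cast hupper
    _ ≤ (Mpsi ψ T : ℝ) * Real.logb 2 (T.N : ℝ) := by
        gcongr
        exact_mod_cast Real.natLog_le_logb T.N 2
end

section
/- Let A be a nonempty closed class of decision tables over E_k on which the function S (depth-version separation complexity) is not bounded from above. Then for every n ∈ ω there exists a table T* ∈ A with exactly n columns such that the minimum depth of a deterministic decision tree for T* equals n; consequently F^W_{h,A}(n) = F^Θ_{h,A}(n) = n for all n. -/
open ClosedClasses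

/-! A minimal separating set `D` of a row `r` with `|D| = S(T) ≥ n` is sensitive at each of its
columns: dropping `a ∈ D` lets some row `r_a` through, and `r_a` differs from `r` on `D` only at
`a`. Keep `n` columns of `D` and give decision 1 to `r` alone. Any decision tree must then query
all `n` columns on the path of `r`, since otherwise it cannot tell `r` from `r_a`; and querying all
columns always suffices, which gives `h^d ≤ Θ ≤ W`. -/

namespace ClosedClasses

variable {k : ℕ}

@[simp]
lemma restrict_apply (D : Finset ℕ) (r : ℕ → Fin (k + 2)) (a : ℕ) :
    restrict D r a = if a ∈ D then r a else 0 := rfl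

namespace Table

lemma eq_of_forall_mem_attrs_eq (T : Table k) {r r' : ℕ → Fin (k + 2)} (hr : r ∈ T.rows)
    (hr' : r' ∈ T.rows) (h : ∀ a ∈ T.attrs, r a = r' a) : r = r' := by
  funext a
  by_cases ha : a ∈ T.attrs
  · exact h a ha
  · rw [T.supp r hr a ha, T.supp r' hr' a ha]

lemma isTest_attrs (T : Table k) : T.IsTest T.attrs := by
  refine ⟨subset_rfl, fun r hr r' hr' hdec => ?_⟩
  by_contra! h
  exact hdec (congrArg T.dec (T.eq_of_forall_mem_attrs_eq hr hr' h))

lemma Srow_le_W (T : Table k) {r : ℕ → Fin (k + 2)} (hr : r ∈ T.rows) : T.Srow r ≤ T.W :=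
  Nat.sInf_le ⟨T.attrs, T.separates_attrs hr, rfl⟩

lemma exists_Srow_eq_S (T : Table k) (hS : 0 < T.S) : ∃ r ∈ T.rows, T.Srow r = T.S := by
  have hne : {m | ∃ r ∈ T.rows, T.Srow r = m}.Nonempty := by
    by_contra! h
    simp [S, h] at hS
  have hbdd : BddAbove {m | ∃ r ∈ T.rows, T.Srow r = m} := by
    refine ⟨T.W, ?_⟩
    rintro _ ⟨r, hr, rfl⟩
    exact T.Srow_le_W hr
  exact Nat.sSup_mem hne hbdd

lemma exists_separates_card_eq_Srow (T : Table k) {r : ℕ → Fin (k + 2)} (hr : r ∈ T.rows) :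
    ∃ D, T.Separates D r ∧ D.card = T.Srow r :=
  Nat.sInf_mem (s := {m | ∃ D, T.Separates D r ∧ D.card = m})
    ⟨T.W, T.attrs, T.separates_attrs hr, rfl⟩

lemma exists_isTest_card_eq_theta (T : Table k) : ∃ D, T.IsTest D ∧ D.card = T.theta :=
  Nat.sInf_mem (s := {m | ∃ D, T.IsTest D ∧ D.card = m}) ⟨T.W, T.attrs, T.isTest_attrs, rfl⟩

lemma exists_row_ne_only_at {T : Table k} {D : Finset ℕ} {r : ℕ → Fin (k + 2)}
    (hsep : T.Separates D r) (hcard : D.card = T.Srow r) {a : ℕ} (ha : a ∈ D) :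
    ∃ r' ∈ T.rows, r' a ≠ r a ∧ ∀ b ∈ D, b ≠ a → r' b = r b := by
  have herase : ¬ T.Separates (D.erase a) r := fun hsep' => by
    have : T.Srow r ≤ (D.erase a).card := Nat.sInf_le ⟨D.erase a, hsep', rfl⟩
    rw [Finset.card_erase_of_mem ha] at this
    have : 0 < D.card := Finset.card_pos.2 ⟨a, ha⟩
    omega
  simp only [Separates, (Finset.erase_subset a D).trans hsep.1, true_and, not_forall,
    not_exists, not_and, not_not] at herase
  obtain ⟨r', hr', hne, hagree⟩ := herase
  refine ⟨r', hr', fun h => ?_,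
    fun b hb hba => (hagree b (Finset.mem_erase.2 ⟨hba, hb⟩)).symm⟩
  obtain ⟨b, hb, hrb⟩ := hsep.2 r' hr' hne
  rcases eq_or_ne b a with rfl | hba
  · exact hrb h.symm
  · exact hrb (hagree b (Finset.mem_erase.2 ⟨hba, hb⟩))

noncomputable def restrictTo (T : Table k) (D : Finset ℕ) (d : (ℕ → Fin (k + 2)) → Bool) :
    Table k where
  attrs := D
  rows := by classical exact T.rows.image (restrict D)
  dec := d
  supp := by
    simp only [Finset.mem_image]
    rintro _ ⟨r, -, rfl⟩ a ha
    simp [ha]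

lemma inClosure_restrictTo (T : Table k) {D : Finset ℕ} (hD : D ⊆ T.attrs)
    (d : (ℕ → Fin (k + 2)) → Bool) : InClosure (T.restrictTo D d) T :=
  ⟨hD, by simp [restrictTo]⟩

end Table

/-- `σ` accumulates the values read so far; the leaf decision is `d` of it. -/
def queryTree (d : (ℕ → Fin (k + 2)) → Bool) : List ℕ → (ℕ → Fin (k + 2)) → DT k
  | [], σ => .leaf (d σ)
  | a :: L, σ => .node a fun v => queryTree d L (Function.update σ a v)

lemma depth_queryTree_le (d : (ℕ → Fin (k + 2)) → Bool) (L : List ℕ)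
    (σ : ℕ → Fin (k + 2)) :
    (queryTree d L σ).depth ≤ L.length := by
  induction L generalizing σ with
  | nil => simp [queryTree, DT.depth]
  | cons a L ih =>
    have : (Finset.univ.sup fun v => (queryTree d L (Function.update σ a v)).depth) ≤ L.length :=
      Finset.sup_le fun v _ => ih _
    simp only [queryTree, DT.depth, List.length_cons]
    omega

lemma attrSet_queryTree_subset (d : (ℕ → Fin (k + 2)) → Bool) (L : List ℕ)
    (σ : ℕ → Fin (k + 2)) : (queryTree d L σ).attrSet ⊆ L.toFinset := by
  induction L generalizing σ with
  | nil => simp [queryTree, DT.attrSet]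
  | cons a L ih =>
    simp only [queryTree, DT.attrSet, List.toFinset_cons]
    exact Finset.insert_subset_insert _ (Finset.biUnion_subset.2 fun v _ => ih _)

lemma eval_queryTree (d : (ℕ → Fin (k + 2)) → Bool) (L : List ℕ)
    (σ r : ℕ → Fin (k + 2)) :
    (queryTree d L σ).eval r = d fun a => if a ∈ L then r a else σ a := by
  induction L generalizing σ with
  | nil => simp [queryTree, DT.eval]
  | cons a L ih =>
    simp only [queryTree, DT.eval, ih, List.mem_cons]
    congr 1
    funext b
    by_cases hbL : b ∈ L
    · simp [hbL]
    · rcases eq_or_ne b a with rfl | hba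
      · simp
      · simp [hbL, hba]

lemma exists_isDT_depth_le_card (T : Table k) {D : Finset ℕ} (hD : D ⊆ T.attrs)
    (hdet : ∀ r ∈ T.rows, ∀ r' ∈ T.rows, (∀ a ∈ D, r a = r' a) → T.dec r = T.dec r') :
    ∃ Γ : DT k, IsDT T Γ ∧ Γ.depth ≤ D.card := by
  classical
  let d : (ℕ → Fin (k + 2)) → Bool := fun σ =>
    if h : ∃ r ∈ T.rows, restrict D r = σ then T.dec h.choose else false
  refine ⟨queryTree d D.toList 0, ⟨?_, fun r hr => ?_⟩, ?_⟩
  · exact (attrSet_queryTree_subset _ _ _).trans (by simpa using hD)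
  · have hex : ∃ r₀ ∈ T.rows, restrict D r₀ = restrict D r := ⟨r, hr, rfl⟩
    have heval : (queryTree d D.toList 0).eval r = d (restrict D r) := by
      rw [eval_queryTree]
      simp only [Finset.mem_toList, Pi.zero_apply]
      rfl
    obtain ⟨hr₀, hr₀r⟩ := hex.choose_spec
    rw [heval]
    simp only [d, dif_pos hex]
    exact hdet _ hr₀ _ hr fun a ha => by simpa [ha] using congrFun hr₀r a
  · simpa using depth_queryTree_le d D.toList 0

lemma exists_isDT_depth_le_W (T : Table k) : ∃ Γ : DT k, IsDT T Γ ∧ Γ.depth ≤ T.W :=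
  exists_isDT_depth_le_card T subset_rfl
    fun _ hr _ hr' h => congrArg T.dec (T.eq_of_forall_mem_attrs_eq hr hr' h)

lemma hd_le_depth {T : Table k} {Γ : DT k} (hΓ : IsDT T Γ) : hd T ≤ Γ.depth :=
  Nat.sInf_le ⟨Γ, hΓ, rfl⟩

lemma hd_le_card (T : Table k) {D : Finset ℕ} (hD : D ⊆ T.attrs)
    (hdet : ∀ r ∈ T.rows, ∀ r' ∈ T.rows, (∀ a ∈ D, r a = r' a) → T.dec r = T.dec r') :
    hd T ≤ D.card := by
  obtain ⟨Γ, hΓ, hdepth⟩ := exists_isDT_depth_le_card T hD hdet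
  exact (hd_le_depth hΓ).trans hdepth

lemma hd_le_W (T : Table k) : hd T ≤ T.W := by
  obtain ⟨Γ, hΓ, hdepth⟩ := exists_isDT_depth_le_W T
  exact (hd_le_depth hΓ).trans hdepth

lemma hd_le_theta (T : Table k) : hd T ≤ T.theta := by
  obtain ⟨D, hD, hcard⟩ := T.exists_isTest_card_eq_theta
  refine hcard ▸ hd_le_card T hD.1 fun r hr r' hr' hagree => ?_
  by_contra hdec
  obtain ⟨a, ha, hne⟩ := hD.2 r hr r' hr' hdec
  exact hne (hagree a ha)

lemma exists_isDT_depth_eq_hd (T : Table k) : ∃ Γ : DT k, IsDT T Γ ∧ Γ.depth = hd T := by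
  obtain ⟨Γ, hΓ, -⟩ := exists_isDT_depth_le_W T
  exact Nat.sInf_mem (s := {m | ∃ Γ : DT k, IsDT T Γ ∧ Γ.depth = m})
    ⟨Γ.depth, Γ, hΓ, rfl⟩

def DT.path : DT k → (ℕ → Fin (k + 2)) → List ℕ
  | .leaf _, _ => []
  | .node a ch, r => a :: (ch (r a)).path r

lemma DT.length_path_le_depth (Γ : DT k) (r : ℕ → Fin (k + 2)) :
    (Γ.path r).length ≤ Γ.depth := by
  induction Γ with
  | leaf b => simp [DT.path, DT.depth]
  | node a ch ih =>
    have := (ih (r a)).trans (Finset.le_sup (f := fun v => (ch v).depth) (Finset.mem_univ (r a)))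
    simp only [DT.path, DT.depth, List.length_cons]
    omega

lemma DT.eval_eq_of_forall_mem_path (Γ : DT k) {r r' : ℕ → Fin (k + 2)}
    (h : ∀ a ∈ Γ.path r, r' a = r a) : Γ.eval r' = Γ.eval r := by
  induction Γ with
  | leaf b => rfl
  | node a ch ih =>
    have ha : r' a = r a := h a List.mem_cons_self
    simp only [DT.eval, ha]
    exact ih (r a) fun b hb => h b (List.mem_cons_of_mem a hb)

lemma mem_path_of_dec_ne {T : Table k} {Γ : DT k} (hΓ : IsDT T Γ) {r r' : ℕ → Fin (k + 2)}
    (hr : r ∈ T.rows) (hr' : r' ∈ T.rows) (hdec : T.dec r' ≠ T.dec r) {a : ℕ}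
    (hagree : ∀ b, b ≠ a → r' b = r b) : a ∈ Γ.path r := by
  by_contra ha
  have := Γ.eval_eq_of_forall_mem_path fun b hb => hagree b fun hba => ha (hba ▸ hb)
  rw [hΓ.2 r hr, hΓ.2 r' hr'] at this
  exact hdec this

lemma card_le_hd_of_sensitive (T : Table k) {r : ℕ → Fin (k + 2)} (hr : r ∈ T.rows)
    (D : Finset ℕ)
    (hD : ∀ a ∈ D, ∃ r' ∈ T.rows, T.dec r' ≠ T.dec r ∧ ∀ b, b ≠ a → r' b = r b) :
    D.card ≤ hd T := by
  obtain ⟨Γ, hΓ, hdepth⟩ := exists_isDT_depth_eq_hd T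
  have hsub : D ⊆ (Γ.path r).toFinset := fun a ha => by
    obtain ⟨r', hr', hdec, hagree⟩ := hD a ha
    exact List.mem_toFinset.2 (mem_path_of_dec_ne hΓ hr hr' hdec hagree)
  calc D.card ≤ (Γ.path r).toFinset.card := Finset.card_le_card hsub
    _ ≤ (Γ.path r).length := List.toFinset_card_le _
    _ ≤ Γ.depth := Γ.length_path_le_depth r
    _ = hd T := hdepth

lemma exists_inClosure_W_eq_hd_eq (T : Table k) (hS : 0 < T.S) {n : ℕ} (hn : n ≤ T.S) :
    ∃ T' : Table k, InClosure T' T ∧ T'.W = n ∧ hd T' = n := by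
  classical
  obtain ⟨r, hr, hrS⟩ := T.exists_Srow_eq_S hS
  obtain ⟨D, hsep, hcard⟩ := T.exists_separates_card_eq_Srow hr
  obtain ⟨D', hD'D, hD'card⟩ := Finset.exists_subset_card_eq (hn.trans (hcard.trans hrS).ge)
  let T' := T.restrictTo D' fun s => decide (s = restrict D' r)
  refine ⟨T', T.inClosure_restrictTo (hD'D.trans hsep.1) _, hD'card,
    le_antisymm (hd_le_W T' |>.trans hD'card.le) ?_⟩
  refine hD'card ▸ card_le_hd_of_sensitive T' (Finset.mem_image_of_mem _ hr) D' fun a ha => ?_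
  obtain ⟨r', hr', hne, hagree⟩ := Table.exists_row_ne_only_at hsep hcard (hD'D ha)
  refine ⟨restrict D' r', Finset.mem_image_of_mem _ hr', ?_, fun b hba => ?_⟩
  · have : restrict D' r' ≠ restrict D' r := fun h => hne (by simpa [ha] using congrFun h a)
    simpa [T', Table.restrictTo] using this
  · by_cases hb : b ∈ D'
    · simp [hb, hagree b (hD'D hb) hba]
    · simp [hb]

end ClosedClasses

/-- Theorem 2: if `S` is unbounded on a nonempty closed class
`A`, then for every `n` there is `T* ∈ A` with exactly `n` columns and
`h^d(T*) = n`, while every `T ∈ A` with `W(T) ≤ n` (or `Θ(T) ≤ n`) has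
`h^d(T) ≤ n`; hence `F^W_{h,A}(n) = F^Θ_{h,A}(n) = n`. -/
theorem FW_FTheta_eq_n (k : ℕ) (A : Set (Table k)) (hA : ClosedClass A)
    (hS : ∀ m : ℕ, ∃ T ∈ A, m ≤ T.S) :
    ∀ n : ℕ,
      (∃ T' ∈ A, T'.W = n ∧ hd T' = n) ∧
      (∀ T ∈ A, T.W ≤ n → hd T ≤ n) ∧
      (∀ T ∈ A, T.theta ≤ n → hd T ≤ n) := by
  intro n
  refine ⟨?_, fun T _ hW => (hd_le_W T).trans hW, fun T _ hθ => (hd_le_theta T).trans hθ⟩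
  obtain ⟨T, hTA, hTS⟩ := hS (max n 1)
  obtain ⟨T', hT'T, hW, hhd⟩ :=
    exists_inClosure_W_eq_hd_eq T (by omega) (le_of_max_le_left hTS)
  exact ⟨T', hA.2 T hTA T' hT'T, hW, hhd⟩
end
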